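/- Let n = n₁ + n₂ with n₁, n₂ ≥ 1, let 𝔥 ⊆ so(n₁) be a Lie subalgebra with derived subalgebra 𝔥′ and center z(𝔥), and let ψ : 𝔥 → ℝ^{n₂} be a linear map with ψ|_{𝔥′} = 0. Let 𝔥ol^{4,𝔥,ψ} be as in the context. Then for every R ∈ 𝓡(𝔥ol^{4,𝔥,ψ}) and all y, z ∈ span{X_{n₁+1}, …, X_n} (the ℝ^{n₂}-part of the screen), the U-component of R(V,y)z vanishes: η(R(V,y)z, V) = 0. (This is the statement that the component R_3(V,·) vanishes on ℝ^{n₂} for holonomy algebras of type 4.) -/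

import Mathlib

attribute [local instance 100] LieRing.ofAssociativeRing

def idx1 (n₁ n₂ : ℕ) (i : Fin n₁) : Fin (n₁ + n₂ + 2) := ⟨(i : ℕ) + 1, by omega⟩

def idx2 (n₁ n₂ : ℕ) (k : Fin n₂) : Fin (n₁ + n₂ + 2) := ⟨n₁ + 1 + (k : ℕ), by omega⟩

def idxV (n₁ n₂ : ℕ) : Fin (n₁ + n₂ + 2) := ⟨n₁ + n₂ + 1, by omega⟩

/-- The Lorentzian form `η` on `ℝ^{n₁+n₂+2}`. -/
def eta4 (n₁ n₂ : ℕ) (x y : Fin (n₁ + n₂ + 2) → ℝ) : ℝ :=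
  x 0 * y (idxV n₁ n₂) + x (idxV n₁ n₂) * y 0 +
    (∑ i : Fin n₁, x (idx1 n₁ n₂ i) * y (idx1 n₁ n₂ i)) +
    ∑ k : Fin n₂, x (idx2 n₁ n₂ k) * y (idx2 n₁ n₂ k)

/-- The vector `V = e_{n+1}`, `n = n₁ + n₂`. -/
def Vvec4 (n₁ n₂ : ℕ) : Fin (n₁ + n₂ + 2) → ℝ := Pi.single (idxV n₁ n₂) 1

/-- The basis vectors `X_{n₁+1}, …, X_n` spanning the `ℝ^{n₂}`-part of the screen. -/
def X2set (n₁ n₂ : ℕ) : Set (Fin (n₁ + n₂ + 2) → ℝ) :=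
  Set.range fun k : Fin n₂ => Pi.single (idx2 n₁ n₂ k) 1

/-- The `(i,j)` matrix entry of an endomorphism of `ℝ^{n₁+n₂+2}` in the standard basis. -/
def entryE4 (n₁ n₂ : ℕ) (M : Module.End ℝ (Fin (n₁ + n₂ + 2) → ℝ))
    (i j : Fin (n₁ + n₂ + 2)) : ℝ :=
  M (Pi.single j 1) i

/-- The holonomy algebra `𝔥ol^{4,𝔥,ψ}` as a set of endomorphisms of `ℝ^{n₁+n₂+2}`: those whose
matrix in the basis `U, X_1, …, X_n, V` has block form (blocks of sizes `1, n₁, n₂, 1`)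
`[[0, X, ψ(B), 0], [0, A + B, 0, -Xᵗ], [0, 0, 0, -ψ(B)ᵗ], [0, 0, 0, 0]]`
with `X ∈ ℝ^{n₁}`, `A ∈ 𝔥' = [𝔥,𝔥]`, `B ∈ z(𝔥)`. -/
def hol4E (n₁ n₂ : ℕ) (𝔥 : LieSubalgebra ℝ (Matrix (Fin n₁) (Fin n₁) ℝ))
    (ψ : 𝔥 →ₗ[ℝ] (Fin n₂ → ℝ)) :
    Set (Module.End ℝ (Fin (n₁ + n₂ + 2) → ℝ)) :=
  {M | ∃ (X : Fin n₁ → ℝ) (A B : 𝔥), A ∈ LieAlgebra.derivedSeries ℝ 𝔥 1 ∧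
    B ∈ LieAlgebra.center ℝ 𝔥 ∧
    entryE4 n₁ n₂ M 0 0 = 0 ∧ (∀ j, entryE4 n₁ n₂ M 0 (idx1 n₁ n₂ j) = X j) ∧
    (∀ k, entryE4 n₁ n₂ M 0 (idx2 n₁ n₂ k) = ψ B k) ∧ entryE4 n₁ n₂ M 0 (idxV n₁ n₂) = 0 ∧
    (∀ i, entryE4 n₁ n₂ M (idx1 n₁ n₂ i) 0 = 0) ∧
    (∀ i j, entryE4 n₁ n₂ M (idx1 n₁ n₂ i) (idx1 n₁ n₂ j) =
      (A : Matrix (Fin n₁) (Fin n₁) ℝ) i j + (B : Matrix (Fin n₁) (Fin n₁) ℝ) i j) ∧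
    (∀ i k, entryE4 n₁ n₂ M (idx1 n₁ n₂ i) (idx2 n₁ n₂ k) = 0) ∧
    (∀ i, entryE4 n₁ n₂ M (idx1 n₁ n₂ i) (idxV n₁ n₂) = -X i) ∧
    (∀ k, entryE4 n₁ n₂ M (idx2 n₁ n₂ k) 0 = 0) ∧
    (∀ k j, entryE4 n₁ n₂ M (idx2 n₁ n₂ k) (idx1 n₁ n₂ j) = 0) ∧
    (∀ k l, entryE4 n₁ n₂ M (idx2 n₁ n₂ k) (idx2 n₁ n₂ l) = 0) ∧
    (∀ k, entryE4 n₁ n₂ M (idx2 n₁ n₂ k) (idxV n₁ n₂) = -ψ B k) ∧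
    entryE4 n₁ n₂ M (idxV n₁ n₂) 0 = 0 ∧
    (∀ j, entryE4 n₁ n₂ M (idxV n₁ n₂) (idx1 n₁ n₂ j) = 0) ∧
    (∀ k, entryE4 n₁ n₂ M (idxV n₁ n₂) (idx2 n₁ n₂ k) = 0) ∧
    entryE4 n₁ n₂ M (idxV n₁ n₂) (idxV n₁ n₂) = 0}


lemma eta4_right_V (n₁ n₂ : ℕ) (w : Fin (n₁ + n₂ + 2) → ℝ) :
    eta4 n₁ n₂ w (Vvec4 n₁ n₂) = w 0 := by
  have h0 : (0 : Fin (n₁ + n₂ + 2)) ≠ idxV n₁ n₂ :=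
    Fin.ne_of_val_ne (by simp [idxV])
  have h1 : ∀ i : Fin n₁, idx1 n₁ n₂ i ≠ idxV n₁ n₂ := fun i =>
    Fin.ne_of_val_ne (by simp only [idx1, idxV]; omega)
  have h2 : ∀ m : Fin n₂, idx2 n₁ n₂ m ≠ idxV n₁ n₂ := fun m =>
    Fin.ne_of_val_ne (by simp only [idx2, idxV]; omega)
  simp [eta4, Vvec4, Pi.single_apply, h0, h1, h2]

lemma key4 (n₁ n₂ : ℕ)
    (𝔥 : LieSubalgebra ℝ (Matrix (Fin n₁) (Fin n₁) ℝ))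
    (hskew : ∀ A ∈ 𝔥, A.transpose = -A)
    (ψ : 𝔥 →ₗ[ℝ] (Fin n₂ → ℝ))
    (hψ : ∀ A ∈ LieAlgebra.derivedSeries ℝ 𝔥 1, ψ A = 0)
    (R : (Fin (n₁ + n₂ + 2) → ℝ) →ₗ[ℝ] (Fin (n₁ + n₂ + 2) → ℝ) →ₗ[ℝ]
      Module.End ℝ (Fin (n₁ + n₂ + 2) → ℝ))
    (hRval : ∀ u v, R u v ∈ hol4E n₁ n₂ 𝔥 ψ)
    (hRanti : ∀ u v, R u v = -R v u)
    (hRBianchi : ∀ u v w, R u v w + R v w u + R w u v = 0)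
    (k l : Fin n₂) :
    R (Vvec4 n₁ n₂) (Pi.single (idx2 n₁ n₂ k) 1) (Pi.single (idx2 n₁ n₂ l) 1) 0 = 0 := by
  classical
  set σ : Fin n₂ → (Fin (n₁ + n₂ + 2) → ℝ) :=
    fun m => Pi.single (idx2 n₁ n₂ m) 1 with hσ
  set x : Fin n₁ → (Fin (n₁ + n₂ + 2) → ℝ) :=
    fun i => Pi.single (idx1 n₁ n₂ i) 1 with hx
  obtain ⟨X, A, B, hA, hB, _, _, h02, _, _, h11, _, _, _, _, _, _, _, _, _, _⟩ :=
    hRval (σ k) (Vvec4 n₁ n₂)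
  -- step (a)
  have ha : ∀ i j, R (σ k) (Vvec4 n₁ n₂) (x i) (idx1 n₁ n₂ j)
      = R (x i) (σ k) (x j) 0 := by
    intro i j
    obtain ⟨X1, _, _, _, _, _, g01, _, _, _, _, _, g1V, _, _, _, _, _, _, _, _⟩ :=
      hRval (x i) (σ k)
    obtain ⟨_, _, _, _, _, _, _, _, _, _, _, q12, _, _, _, _, _, _, _, _, _⟩ :=
      hRval (Vvec4 n₁ n₂) (x i)
    have hb := congrFun (hRBianchi (x i) (σ k) (Vvec4 n₁ n₂)) (idx1 n₁ n₂ j)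
    simp only [Pi.add_apply, Pi.zero_apply] at hb
    have t1 : R (x i) (σ k) (Vvec4 n₁ n₂) (idx1 n₁ n₂ j) = -X1 j := g1V j
    have t3 : R (Vvec4 n₁ n₂) (x i) (σ k) (idx1 n₁ n₂ j) = 0 := q12 j k
    have t4 : R (x i) (σ k) (x j) 0 = X1 j := g01 j
    rw [t1, t3] at hb
    rw [t4]
    linarith
  -- step (b)
  have hsymm : ∀ i j, R (x i) (σ k) (x j) 0 = R (x j) (σ k) (x i) 0 := by
    intro i j
    obtain ⟨_, _, B2, _, _, _, _, r02, _, _, _, _, _, _, _, _, r2V, _, _, _, _⟩ :=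
      hRval (x i) (x j)
    obtain ⟨_, _, _, _, _, _, _, _, _, _, _, _, _, _, s21, _, _, _, _, _, _⟩ :=
      hRval (x j) (Vvec4 n₁ n₂)
    obtain ⟨_, _, _, _, _, _, _, _, _, _, _, _, _, _, q21, _, _, _, _, _, _⟩ :=
      hRval (Vvec4 n₁ n₂) (x i)
    have e2 := congrFun (hRBianchi (x i) (x j) (Vvec4 n₁ n₂)) (idx2 n₁ n₂ k)
    simp only [Pi.add_apply, Pi.zero_apply] at e2
    have u1 : R (x i) (x j) (Vvec4 n₁ n₂) (idx2 n₁ n₂ k) = -ψ B2 k := r2V k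
    have u2 : R (x j) (Vvec4 n₁ n₂) (x i) (idx2 n₁ n₂ k) = 0 := s21 k i
    have u3 : R (Vvec4 n₁ n₂) (x i) (x j) (idx2 n₁ n₂ k) = 0 := q21 k j
    rw [u1, u2, u3] at e2
    have hψB2 : ψ B2 k = 0 := by linarith
    have e1 := congrFun (hRBianchi (x i) (x j) (σ k)) 0
    simp only [Pi.add_apply, Pi.zero_apply] at e1
    have v1 : R (x i) (x j) (σ k) 0 = ψ B2 k := r02 k
    have v3 : R (σ k) (x i) (x j) 0 = -(R (x i) (σ k) (x j) 0) := by
      rw [hRanti (σ k) (x i)]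
      simp only [LinearMap.neg_apply, Pi.neg_apply]
    rw [v1, v3, hψB2] at e1
    linarith
  -- entries of A + B vanish
  have hAB : ∀ i j, (A : Matrix (Fin n₁) (Fin n₁) ℝ) i j
      + (B : Matrix (Fin n₁) (Fin n₁) ℝ) i j = 0 := by
    intro i j
    have e1 : (A : Matrix (Fin n₁) (Fin n₁) ℝ) j i
        + (B : Matrix (Fin n₁) (Fin n₁) ℝ) j i = R (x i) (σ k) (x j) 0 :=
      (h11 j i).symm.trans (ha i j)
    have e2 : (A : Matrix (Fin n₁) (Fin n₁) ℝ) i j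
        + (B : Matrix (Fin n₁) (Fin n₁) ℝ) i j = R (x j) (σ k) (x i) 0 :=
      (h11 i j).symm.trans (ha j i)
    have sA : (A : Matrix (Fin n₁) (Fin n₁) ℝ) j i
        = -(A : Matrix (Fin n₁) (Fin n₁) ℝ) i j := by
      have h := congrFun (congrFun (hskew A A.2) i) j
      simpa [Matrix.transpose_apply, Matrix.neg_apply] using h
    have sB : (B : Matrix (Fin n₁) (Fin n₁) ℝ) j i
        = -(B : Matrix (Fin n₁) (Fin n₁) ℝ) i j := by
      have h := congrFun (congrFun (hskew B B.2) i) j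
      simpa [Matrix.transpose_apply, Matrix.neg_apply] using h
    have := hsymm i j
    linarith
  have hAB0 : A + B = 0 := by
    have hcoe : ((A + B : 𝔥) : Matrix (Fin n₁) (Fin n₁) ℝ) = 0 := by
      ext i j
      have h := hAB i j
      have hadd : ((A + B : 𝔥) : Matrix (Fin n₁) (Fin n₁) ℝ)
          = (A : Matrix (Fin n₁) (Fin n₁) ℝ) + (B : Matrix (Fin n₁) (Fin n₁) ℝ) := rfl
      rw [hadd]
      simp only [Matrix.add_apply, Matrix.zero_apply]
      linarith
    exact (LieSubalgebra.coe_zero_iff_zero 𝔥 (A + B)).mp hcoe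
  have hψB : ψ B = 0 := by
    have h0 : ψ (A + B) = 0 := by rw [hAB0, map_zero]
    rw [map_add, hψ A hA, zero_add] at h0
    exact h0
  rw [hRanti (Vvec4 n₁ n₂) (σ k)]
  simp only [LinearMap.neg_apply, Pi.neg_apply]
  have hval : R (σ k) (Vvec4 n₁ n₂) (σ l) 0 = ψ B l := h02 l
  rw [hval, hψB]
  simp

/-- every curvature tensor `R ∈ 𝓡(𝔥ol^{4,𝔥,ψ})` satisfies, for all
`y, z ∈ span{X_{n₁+1}, …, X_n}`, the vanishing of the `U`-component of `R(V,y)z`: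
`η(R(V,y)z, V) = 0` (the component `R_3(V,·)` vanishes on `ℝ^{n₂}` for type 4). -/
theorem statement19 (n₁ n₂ : ℕ) (hn₁ : 1 ≤ n₁) (hn₂ : 1 ≤ n₂)
    (𝔥 : LieSubalgebra ℝ (Matrix (Fin n₁) (Fin n₁) ℝ))
    (hskew : ∀ A ∈ 𝔥, A.transpose = -A)
    (ψ : 𝔥 →ₗ[ℝ] (Fin n₂ → ℝ))
    (hψ : ∀ A ∈ LieAlgebra.derivedSeries ℝ 𝔥 1, ψ A = 0)
    (R : (Fin (n₁ + n₂ + 2) → ℝ) →ₗ[ℝ] (Fin (n₁ + n₂ + 2) → ℝ) →ₗ[ℝ]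
      Module.End ℝ (Fin (n₁ + n₂ + 2) → ℝ))
    (hRval : ∀ u v, R u v ∈ hol4E n₁ n₂ 𝔥 ψ)
    (hRanti : ∀ u v, R u v = -R v u)
    (hRBianchi : ∀ u v w, R u v w + R v w u + R w u v = 0) :
    ∀ y ∈ Submodule.span ℝ (X2set n₁ n₂), ∀ z ∈ Submodule.span ℝ (X2set n₁ n₂),
      eta4 n₁ n₂ (R (Vvec4 n₁ n₂) y z) (Vvec4 n₁ n₂) = 0 := by
  classical
  have key := key4 n₁ n₂ 𝔥 hskew ψ hψ R hRval hRanti hRBianchi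
  intro y hy z hz
  rw [eta4_right_V]
  induction hy using Submodule.span_induction with
  | mem y' hy' =>
    obtain ⟨k, rfl⟩ := hy'
    induction hz using Submodule.span_induction with
    | mem z' hz' =>
      obtain ⟨l, rfl⟩ := hz'
      exact key k l
    | zero => simp
    | add z₁ z₂ _ _ ih1 ih2 =>
      rw [map_add, Pi.add_apply, ih1, ih2, add_zero]
    | smul a z₁ _ ih =>
      rw [map_smul, Pi.smul_apply, ih, smul_zero]
  | zero => simp
  | add y₁ y₂ _ _ ih1 ih2 =>
    rw [map_add, LinearMap.add_apply, Pi.add_apply, ih1, ih2, add_zero]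
  | smul a y₁ _ ih =>
    rw [map_smul, LinearMap.smul_apply, Pi.smul_apply, ih, smul_zero]
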